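/- If there exists a nonzero linear form l = au+bv of bidegree (0,1) such that s²l, stl, and t²l all lie in U, then U is not basepoint free. -/

import Mathlib

/-! On the line `u = b, v = -a`, where `l` vanishes, the three forms `s²l, stl, t²l` vanish
identically. They are linearly independent, so the four-dimensional `U` is spanned by them and one
more form `q`, whose restriction to that line is a binary quadratic form in `s, t`. Over an
algebraically closed field it has a nontrivial zero `(x, y)`, so all of `U` vanishes at
`(x, y, b, -a)`, a point off both `V(s, t)` and `V(u, v)`; hence the radical of `I_U` cannot be
`⟨s, t⟩ ∩ ⟨u, v⟩`. -/

open MvPolynomial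

noncomputable section

def biDeg (k : Type*) [CommRing k] (m n : ℕ) : Submodule k (MvPolynomial (Fin 4) k) where
  carrier := {p | ∀ d ∈ p.support, d 0 + d 1 = m ∧ d 2 + d 3 = n}
  zero_mem' := by simp
  add_mem' := by
    intro p q hp hq d hd
    rcases Finset.mem_union.mp (MvPolynomial.support_add hd) with h | h
    · exact hp d h
    · exact hq d h
  smul_mem' := by
    intro c p hp d hd
    exact hp d (MvPolynomial.support_smul hd)

def syzMap {k : Type*} [CommRing k] (p : Fin 4 → MvPolynomial (Fin 4) k) :
    (Fin 4 → MvPolynomial (Fin 4) k) →ₗ[k] MvPolynomial (Fin 4) k where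
  toFun ℓ := ∑ i, ℓ i * p i
  map_add' ℓ ℓ' := by simp [add_mul, Finset.sum_add_distrib]
  map_smul' c ℓ := by simp [smul_mul_assoc, Finset.smul_sum]

def Syz {k : Type*} [CommRing k] (p : Fin 4 → MvPolynomial (Fin 4) k) (a b : ℕ) :
    Submodule k (Fin 4 → MvPolynomial (Fin 4) k) :=
  (Submodule.pi Set.univ fun _ => biDeg k a b) ⊓ LinearMap.ker (syzMap p)

theorem exists_ne_zero_quadratic_form_eq_zero {k : Type*} [Field k] [IsAlgClosed k] (A B C : k) :
    ∃ x y : k, (x ≠ 0 ∨ y ≠ 0) ∧ A * x ^ 2 + B * (x * y) + C * y ^ 2 = 0 := by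
  by_cases hA : A = 0
  · exact ⟨1, 0, Or.inl one_ne_zero, by simp [hA]⟩
  obtain ⟨r, hr⟩ := IsAlgClosed.exists_root
    (Polynomial.C A * Polynomial.X ^ 2 + Polynomial.C B * Polynomial.X + Polynomial.C C)
    (by rw [Polynomial.degree_quadratic hA]; norm_num)
  refine ⟨r, 1, Or.inr one_ne_zero, ?_⟩
  simp only [Polynomial.IsRoot, Polynomial.eval_add, Polynomial.eval_mul, Polynomial.eval_C,
    Polynomial.eval_pow, Polynomial.eval_X] at hr
  linear_combination hr

section Bihomogeneous

variable {k : Type*} [CommRing k]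

theorem eval_monomial_eq_quadratic_form {d : Fin 4 →₀ ℕ} (hd : d 0 + d 1 = 2)
    (c x y u v : k) :
    eval ![x, y, u, v] (monomial d c) =
      eval ![1, 0, u, v] (monomial d c) * x ^ 2
      + (eval ![1, 1, u, v] (monomial d c) - eval ![1, 0, u, v] (monomial d c)
          - eval ![0, 1, u, v] (monomial d c)) * (x * y)
      + eval ![0, 1, u, v] (monomial d c) * y ^ 2 := by
  have eval_eq : ∀ w z : k, eval ![w, z, u, v] (monomial d c)
      = c * (w ^ d 0 * z ^ d 1 * u ^ d 2 * v ^ d 3) := by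
    intro w z
    rw [eval_monomial, Finsupp.prod_pow, Fin.prod_univ_four]
    simp
  simp only [eval_eq]
  obtain ⟨h0, h1⟩ | ⟨h0, h1⟩ | ⟨h0, h1⟩ :
      d 0 = 0 ∧ d 1 = 2 ∨ d 0 = 1 ∧ d 1 = 1 ∨ d 0 = 2 ∧ d 1 = 0 := by omega
  all_goals rw [h0, h1]; ring

theorem eval_eq_quadratic_form {p : MvPolynomial (Fin 4) k}
    (hp : ∀ d ∈ p.support, d 0 + d 1 = 2) (x y u v : k) :
    eval ![x, y, u, v] p =
      eval ![1, 0, u, v] p * x ^ 2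
      + (eval ![1, 1, u, v] p - eval ![1, 0, u, v] p - eval ![0, 1, u, v] p) * (x * y)
      + eval ![0, 1, u, v] p * y ^ 2 := by
  conv_lhs => rw [p.as_sum]
  conv_rhs => rw [p.as_sum]
  simp only [map_sum]
  rw [← Finset.sum_sub_distrib, ← Finset.sum_sub_distrib, Finset.sum_mul, Finset.sum_mul,
    Finset.sum_mul, ← Finset.sum_add_distrib, ← Finset.sum_add_distrib]
  exact Finset.sum_congr rfl fun d hd => eval_monomial_eq_quadratic_form (hp d hd) _ x y u v

end Bihomogeneous

theorem exists_ne_zero_eval_eq_zero_of_mem_biDeg {k : Type*} [Field k] [IsAlgClosed k] {n : ℕ}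
    {p : MvPolynomial (Fin 4) k} (hp : p ∈ biDeg k 2 n) (u v : k) :
    ∃ x y : k, (x ≠ 0 ∨ y ≠ 0) ∧ eval ![x, y, u, v] p = 0 := by
  obtain ⟨x, y, hxy, hzero⟩ := exists_ne_zero_quadratic_form_eq_zero (eval ![1, 0, u, v] p)
    (eval ![1, 1, u, v] p - eval ![1, 0, u, v] p - eval ![0, 1, u, v] p) (eval ![0, 1, u, v] p)
  exact ⟨x, y, hxy, by rw [eval_eq_quadratic_form (fun d hd => (hp d hd).1)]; exact hzero⟩

theorem MvPolynomial.linearIndependent_quadratic_monomials {σ R : Type*} [CommRing R]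
    [Nontrivial R] {i j : σ} (hij : i ≠ j) :
    LinearIndependent R ![(X i ^ 2 : MvPolynomial σ R), X i * X j, X j ^ 2] := by
  let e : Fin 3 → σ →₀ ℕ :=
    ![Finsupp.single i 2, Finsupp.single i 1 + Finsupp.single j 1, Finsupp.single j 2]
  have he : Function.Injective e := by
    refine Function.Injective.of_comp (f := fun d : σ →₀ ℕ => d i) ?_
    intro m n hmn
    fin_cases m <;> fin_cases n <;> simp_all [e]
  have hmon : ![(X i ^ 2 : MvPolynomial σ R), X i * X j, X j ^ 2] = basisMonomials σ R ∘ e := by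
    ext m : 1
    fin_cases m <;> simp [e, X, monomial_mul, monomial_pow]
  rw [hmon]
  exact (basisMonomials σ R).linearIndependent.comp e he

theorem MvPolynomial.linearIndependent_quadratic_monomials_mul {σ R : Type*} [CommRing R]
    [IsDomain R] {i j : σ} (hij : i ≠ j) {l : MvPolynomial σ R} (hl : l ≠ 0) :
    LinearIndependent R ![X i ^ 2 * l, X i * X j * l, X j ^ 2 * l] := by
  have hmul : ![X i ^ 2 * l, X i * X j * l, X j ^ 2 * l] =
      LinearMap.mulRight R l ∘ ![X i ^ 2, X i * X j, X j ^ 2] := by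
    ext m : 1
    fin_cases m <;> rfl
  rw [hmul]
  exact (linearIndependent_quadratic_monomials hij).map' _
    (LinearMap.ker_eq_bot.2 (mul_left_injective₀ hl))

theorem Submodule.exists_mem_le_sup_span_singleton {K V : Type*} [DivisionRing K]
    [AddCommGroup V] [Module K V] {W U : Submodule K V} [FiniteDimensional K U] (hWU : W ≤ U)
    (hrank : Module.finrank K U ≤ Module.finrank K W + 1) : ∃ q ∈ U, U ≤ W ⊔ K ∙ q := by
  by_cases hUW : U ≤ W
  · exact ⟨0, U.zero_mem, hUW.trans le_sup_left⟩
  obtain ⟨q, hqU, hqW⟩ := Set.not_subset.1 hUW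
  have hle : W ⊔ K ∙ q ≤ U := sup_le hWU ((span_singleton_le_iff_mem _ _).2 hqU)
  have : FiniteDimensional K ↥(W ⊔ K ∙ q) := finiteDimensional_of_le hle
  have hlt : Module.finrank K W < Module.finrank K ↥(W ⊔ K ∙ q) :=
    finrank_lt_finrank_of_lt (lt_of_le_of_ne le_sup_left fun h =>
      hqW (h ▸ mem_sup_right (mem_span_singleton_self q)))
  exact ⟨q, hqU, (eq_of_le_of_finrank_le hle (by omega)).ge⟩

theorem MvPolynomial.C_mul_X_add_C_mul_X_ne_zero {σ R : Type*} [CommRing R] {i j : σ}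
    (hij : i ≠ j) {a b : R} (hab : ¬ (a = 0 ∧ b = 0)) : C a * X i + C b * X j ≠ 0 := by
  classical
  intro h
  refine hab ⟨?_, ?_⟩
  · simpa [coeff_X, Finsupp.single_left_inj one_ne_zero, hij, hij.symm] using
      congrArg (coeff (Finsupp.single i 1)) h
  · simpa [coeff_X, Finsupp.single_left_inj one_ne_zero, hij, hij.symm] using
      congrArg (coeff (Finsupp.single j 1)) h

theorem radical_span_ne_inf_of_eval_eq_zero {k : Type*} [CommRing k] [IsDomain k]
    {S : Set (MvPolynomial (Fin 4) k)} (P : Fin 4 → k) (hP01 : P 0 ≠ 0 ∨ P 1 ≠ 0)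
    (hP23 : P 2 ≠ 0 ∨ P 3 ≠ 0) (hS : ∀ p ∈ S, eval P p = 0) :
    (Ideal.span S).radical ≠ Ideal.span {X 0, X 1} ⊓ Ideal.span {X 2, X 3} := by
  intro h
  have hle : (Ideal.span S).radical ≤ RingHom.ker (eval P) :=
    (Ideal.IsPrime.radical_le_iff (RingHom.ker_isPrime _)).2 (Ideal.span_le.2 hS)
  obtain ⟨f, hf, hfP⟩ : ∃ f ∈ ({X 0, X 1} : Set (MvPolynomial (Fin 4) k)), eval P f ≠ 0 := by
    rcases hP01 with hP | hP
    exacts [⟨X 0, by simp, by simpa⟩, ⟨X 1, by simp, by simpa⟩]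
  obtain ⟨g, hg, hgP⟩ : ∃ g ∈ ({X 2, X 3} : Set (MvPolynomial (Fin 4) k)), eval P g ≠ 0 := by
    rcases hP23 with hP | hP
    exacts [⟨X 2, by simp, by simpa⟩, ⟨X 3, by simp, by simpa⟩]
  have hfg : f * g ∈ (Ideal.span S).radical := h ▸
    ⟨Ideal.mul_mem_right _ _ (Ideal.subset_span hf), Ideal.mul_mem_left _ _ (Ideal.subset_span hg)⟩
  exact mul_ne_zero hfP hgP (by simpa using hle hfg)

/-- If there is a nonzero linear form l = au+bv of bidegree (0,1) with
s²l, stl, t²l ∈ U, then U is not basepoint free. -/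
theorem statement10 {k : Type*} [Field k] [IsAlgClosed k]
    (U : Submodule k (MvPolynomial (Fin 4) k))
    (hU : U ≤ biDeg k 2 1)
    (hdim : Module.finrank k ↥U = 4)
    (a b : k) (hab : ¬ (a = 0 ∧ b = 0))
    (h1 : X 0 ^ 2 * (C a * X 2 + C b * X 3) ∈ U)
    (h2 : X 0 * X 1 * (C a * X 2 + C b * X 3) ∈ U)
    (h3 : X 1 ^ 2 * (C a * X 2 + C b * X 3) ∈ U) :
    ¬ ((Ideal.span (U : Set (MvPolynomial (Fin 4) k))).radical =
      Ideal.span {X 0, X 1} ⊓ Ideal.span {X 2, X 3}) := by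
  set l : MvPolynomial (Fin 4) k := C a * X 2 + C b * X 3
  have : FiniteDimensional k U := Module.finite_of_finrank_eq_succ hdim
  set W := Submodule.span k (Set.range ![X 0 ^ 2 * l, X 0 * X 1 * l, X 1 ^ 2 * l])
  have hWU : W ≤ U := Submodule.span_le.2 <| Set.range_subset_iff.2 fun i => by
    fin_cases i <;> assumption
  have hW : Module.finrank k W = 3 := by
    rw [finrank_span_eq_card (linearIndependent_quadratic_monomials_mul (by decide)
      (C_mul_X_add_C_mul_X_ne_zero (by decide) hab)), Fintype.card_fin]
  obtain ⟨q, hqU, hUq⟩ := W.exists_mem_le_sup_span_singleton hWU (by omega)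
  obtain ⟨x, y, hxy, hq⟩ := exists_ne_zero_eval_eq_zero_of_mem_biDeg (hU hqU) b (-a)
  have hl : eval ![x, y, b, -a] l = 0 := by simp [l, mul_comm]
  have hUP : U ≤ (RingHom.ker (eval ![x, y, b, -a])).restrictScalars k :=
    hUq.trans <| sup_le (Submodule.span_le.2 <| Set.range_subset_iff.2 fun i => by
      fin_cases i <;> simp [hl]) ((Submodule.span_singleton_le_iff_mem _ _).2 hq)
  refine radical_span_ne_inf_of_eval_eq_zero ![x, y, b, -a] hxy ?_ fun p hp => hUP hp
  by_cases hb : b = 0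
  · exact Or.inr (by simpa using fun ha => hab ⟨ha, hb⟩)
  · exact Or.inl hb
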